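/- For every real number x ≥ 1, ∑_{n ≤ x} (λ_5 ⋆ 𝟏)(n) = ∑_{d ≤ √x} μ(d) ⌊ (x/d²)^{1/5} ⌋, where μ is the Möbius function. -/

import Mathlib

/-!
Both `λ₅ ⋆ 𝟏` and `n ↦ ∑_{d² m⁵ = n} μ(d)` are multiplicative, and at a prime power `p ^ k` both
equal `1, 0, -1, 0, 0` according as `k ≡ 0, 1, 2, 3, 4 (mod 5)`: for the first because the
partial sums of `(j/5)` are `5`-periodic, for the second because only `d ∈ {1, p}` contribute.
Summing the second over `n ≤ x` and counting the `m` with `m⁵ ≤ x / d²` gives the right-hand side.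
-/

instance : Fact (Nat.Prime 5) := ⟨by norm_num⟩

/-- `λ_5(n) = (τ(n)/5)` as a real number. -/
noncomputable def lam5 (n : ℕ) : ℝ :=
  (legendreSym 5 (n.divisors.card : ℤ) : ℝ)

open Finset
open scoped ArithmeticFunction.zeta ArithmeticFunction.Moebius ArithmeticFunction.sigma

namespace ArithmeticFunction

section Expand

variable {R : Type*} [Semiring R] {k : ℕ}

/-- `expand k f` sends `m ^ k` to `f m` and vanishes off the `k`-th powers; its Dirichlet series
is `s ↦ F (k * s)`. -/
def expand (k : ℕ) (f : ArithmeticFunction R) : ArithmeticFunction R :=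
  ⟨fun n => ∑ m ∈ n.divisors with m ^ k = n, f m, by simp⟩

theorem expand_apply (k : ℕ) (f : ArithmeticFunction R) (n : ℕ) :
    expand k f n = ∑ m ∈ n.divisors with m ^ k = n, f m :=
  rfl

theorem expand_apply_pow (hk : k ≠ 0) (f : ArithmeticFunction R) (m : ℕ) :
    expand k f (m ^ k) = f m := by
  rcases eq_or_ne m 0 with rfl | hm
  · simp [zero_pow hk]
  have hfilter : {d ∈ (m ^ k).divisors | d ^ k = m ^ k} = {m} := by
    ext d
    simp only [mem_filter, Nat.mem_divisors, mem_singleton]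
    constructor
    · exact fun h => Nat.pow_left_injective hk h.2
    · rintro rfl
      exact ⟨⟨dvd_pow_self d hk, pow_ne_zero k hm⟩, rfl⟩
  simp [expand_apply, hfilter]

theorem expand_apply_of_forall_pow_ne {n : ℕ} (h : ∀ m, m ^ k ≠ n) (f : ArithmeticFunction R) :
    expand k f n = 0 :=
  (expand_apply k f n).trans <| sum_eq_zero fun m hm => absurd (mem_filter.1 hm).2 (h m)

theorem expand_apply_prime_pow (hk : k ≠ 0) (f : ArithmeticFunction R) {p : ℕ} (hp : p.Prime)
    (i : ℕ) : expand k f (p ^ i) = if k ∣ i then f (p ^ (i / k)) else 0 := by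
  split_ifs with hki
  · rw [← expand_apply_pow hk f, ← pow_mul, Nat.div_mul_cancel hki]
  · refine expand_apply_of_forall_pow_ne (fun m hm => hki ?_) f
    obtain ⟨j, -, rfl⟩ := (Nat.dvd_prime_pow hp).1 (hm ▸ dvd_pow_self m hk)
    rw [← pow_mul] at hm
    exact Dvd.intro_left j (Nat.pow_right_injective hp.two_le hm)

theorem IsMultiplicative.expand {f : ArithmeticFunction R} (hf : f.IsMultiplicative)
    (hk : k ≠ 0) : (expand k f).IsMultiplicative := by
  refine ⟨by rw [← one_pow k, expand_apply_pow hk, hf.map_one], fun {m n} hmn => ?_⟩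
  by_cases hpow : (∃ a, m = a ^ k) ∧ ∃ b, n = b ^ k
  · obtain ⟨⟨a, rfl⟩, ⟨b, rfl⟩⟩ := hpow
    have hab : a.Coprime b := (Nat.coprime_pow_left_iff (Nat.pos_of_ne_zero hk) _ _).1
      ((Nat.coprime_pow_right_iff (Nat.pos_of_ne_zero hk) _ _).1 hmn)
    rw [← mul_pow, expand_apply_pow hk, expand_apply_pow hk, expand_apply_pow hk,
      hf.map_mul_of_coprime hab]
  · have hprod : ∀ c, c ^ k ≠ m * n := by
      rintro c hc
      exact hpow ⟨exists_eq_pow_of_mul_eq_pow (Nat.isUnit_iff.2 hmn) hc.symm,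
        exists_eq_pow_of_mul_eq_pow (Nat.isUnit_iff.2 hmn.symm) ((mul_comm n m).trans hc.symm)⟩
    rw [expand_apply_of_forall_pow_ne hprod]
    rcases not_and_or.1 hpow with hm | hn
    · rw [expand_apply_of_forall_pow_ne (fun a ha => hm ⟨a, ha.symm⟩), zero_mul]
    · rw [expand_apply_of_forall_pow_ne (fun b hb => hn ⟨b, hb.symm⟩), mul_zero]

theorem sum_Ioc_expand_mul (hk : k ≠ 0) (f : ArithmeticFunction R) (g : ℕ → R) (N : ℕ) :
    ∑ n ∈ Ioc 0 N, expand k f n * g n = ∑ m ∈ Ioc 0 N with m ^ k ≤ N, f m * g (m ^ k) := by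
  have himage : ∑ m ∈ Ioc 0 N with m ^ k ≤ N, f m * g (m ^ k) =
      ∑ n ∈ image (· ^ k) {m ∈ Ioc 0 N | m ^ k ≤ N}, expand k f n * g n := by
    rw [sum_image (Nat.pow_left_injective hk).injOn]
    simp only [expand_apply_pow hk]
  rw [himage]
  refine (sum_subset (fun n hn => ?_) fun n hnN hn => ?_).symm
  · obtain ⟨m, hm, rfl⟩ := mem_image.1 hn
    simp only [mem_filter, mem_Ioc] at hm ⊢
    exact ⟨pow_pos hm.1.1 k, hm.2⟩
  · rw [expand_apply_of_forall_pow_ne (fun m hm => hn (mem_image.2 ⟨m, ?_, hm⟩)), zero_mul]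
    subst hm
    simp only [mem_filter, mem_Ioc] at hnN ⊢
    exact ⟨⟨(pow_pos_iff hk).1 hnN.1, (Nat.le_self_pow hk m).trans hnN.2⟩, hnN.2⟩

theorem sum_Ioc_expand_mul_expand_zeta {j : ℕ} (hj : j ≠ 0) (hk : k ≠ 0)
    (f : ArithmeticFunction R) (N : ℕ) :
    ∑ n ∈ Ioc 0 N, (expand j f * expand k (ζ : ArithmeticFunction R)) n =
      ∑ d ∈ Ioc 0 N with d ^ j ≤ N, f d * (#{m ∈ Ioc 0 (N / d ^ j) | m ^ k ≤ N / d ^ j} : R) := by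
  rw [sum_Ioc_mul_eq_sum_sum, sum_Ioc_expand_mul hj]
  refine sum_congr rfl fun d _ => congrArg (f d * ·) ?_
  have := sum_Ioc_expand_mul hk (ζ : ArithmeticFunction R) (fun _ => 1) (N / d ^ j)
  simp only [mul_one] at this
  rw [this, card_eq_sum_ones, Nat.cast_sum]
  refine sum_congr rfl fun m hm => ?_
  simp [(mem_Ioc.1 (mem_filter.1 hm).1).1.ne']

end Expand

theorem mul_apply_prime_pow {R : Type*} [Semiring R] (f g : ArithmeticFunction R) {p : ℕ}
    (hp : p.Prime) (k : ℕ) :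
    (f * g) (p ^ k) = ∑ i ∈ range (k + 1), f (p ^ i) * g (p ^ (k - i)) := by
  rw [mul_apply, Nat.sum_divisorsAntidiagonal (f := fun a b => f a * g b),
    Nat.sum_divisors_prime_pow hp]
  exact sum_congr rfl fun i hi => by rw [Nat.pow_div (Nat.le_of_lt_succ (mem_range.1 hi)) hp.pos]

section Legendre

variable (p : ℕ) [Fact p.Prime]

/-- `λ_p(n) = (τ(n)/p)`; `lam5` is the real-valued case `p = 5`. -/
def legendreTau : ArithmeticFunction ℤ :=
  ⟨fun n => legendreSym p (σ 0 n), by simp⟩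

theorem legendreTau_apply (n : ℕ) : legendreTau p n = legendreSym p (σ 0 n) :=
  rfl

theorem isMultiplicative_legendreTau : (legendreTau p).IsMultiplicative :=
  ⟨by simp [legendreTau_apply], fun h => by
    simp only [legendreTau_apply, isMultiplicative_sigma.map_mul_of_coprime h, Nat.cast_mul,
      legendreSym.mul]⟩

theorem legendreTau_apply_prime_pow {q : ℕ} (hq : q.Prime) (i : ℕ) :
    legendreTau p (q ^ i) = legendreSym p (i + 1 : ℕ) := by
  rw [legendreTau_apply, sigma_zero_apply_prime_pow hq]

end Legendre

/-- `(·/5)` sums to `0` over a period, so its partial sums are `5`-periodic. -/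
theorem sum_range_legendreSym_five (k : ℕ) :
    ∑ i ∈ range (k + 1), legendreSym 5 (i + 1 : ℕ) =
      if k % 5 = 0 then 1 else if k % 5 = 2 then -1 else 0 := by
  induction k with
  | zero => simp
  | succ k ih =>
    have hmod : ((k + 1 + 1 : ℕ) : ℤ) % (5 : ℕ) = ((k % 5 + 2) % 5 : ℕ) := by push_cast; omega
    rw [sum_range_succ, ih, legendreSym.mod, hmod, Nat.add_mod k 1 5]
    have : k % 5 < 5 := Nat.mod_lt _ (by norm_num)
    generalize k % 5 = r at *
    interval_cases r <;> decide

theorem expand_two_moebius_apply_prime_pow {p : ℕ} (hp : p.Prime) (i : ℕ) :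
    expand 2 μ (p ^ i) = (if i = 0 then 1 else 0) - if i = 2 then 1 else 0 := by
  rw [expand_apply_prime_pow two_ne_zero _ hp]
  rcases Nat.even_or_odd' i with ⟨j, rfl | rfl⟩
  · rcases j with _ | _ | j <;> simp [moebius_apply_prime hp, moebius_apply_prime_pow hp]
  · simp

theorem expand_five_zeta_apply_prime_pow {p : ℕ} (hp : p.Prime) (i : ℕ) :
    expand 5 (ζ : ArithmeticFunction ℤ) (p ^ i) = if 5 ∣ i then 1 else 0 := by
  simp [expand_apply_prime_pow (by norm_num : 5 ≠ 0) _ hp, hp.ne_zero]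

theorem expand_two_moebius_mul_expand_five_zeta_apply_prime_pow {p : ℕ} (hp : p.Prime) (k : ℕ) :
    (expand 2 μ * expand 5 (ζ : ArithmeticFunction ℤ)) (p ^ k) =
      if k % 5 = 0 then 1 else if k % 5 = 2 then -1 else 0 := by
  simp only [mul_apply_prime_pow _ _ hp, expand_two_moebius_apply_prime_pow hp,
    expand_five_zeta_apply_prime_pow hp, sub_mul, sum_sub_distrib, ite_mul, one_mul, zero_mul,
    sum_ite_eq', mem_range]
  split_ifs <;> omega

theorem legendreTau_five_mul_zeta :
    legendreTau 5 * ζ = expand 2 μ * expand 5 (ζ : ArithmeticFunction ℤ) := by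
  rw [IsMultiplicative.eq_iff_eq_on_prime_powers _
    ((isMultiplicative_legendreTau 5).mul isMultiplicative_zeta.natCast) _
    ((isMultiplicative_moebius.expand two_ne_zero).mul
      (isMultiplicative_zeta.natCast.expand (by norm_num)))]
  intro p k hp
  rw [coe_mul_zeta_apply, Nat.sum_divisors_prime_pow hp,
    expand_two_moebius_mul_expand_five_zeta_apply_prime_pow hp]
  simp only [legendreTau_apply_prime_pow 5 hp]
  exact sum_range_legendreSym_five k

end ArithmeticFunction

theorem Nat.pow_le_floor_iff_le_floor_rpow {y : ℝ} (hy : 0 ≤ y) {k : ℕ} (hk : k ≠ 0) (m : ℕ) :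
    m ^ k ≤ ⌊y⌋₊ ↔ m ≤ ⌊y ^ (1 / k : ℝ)⌋₊ := by
  rw [Nat.le_floor_iff hy, Nat.le_floor_iff (by positivity), one_div,
    Real.le_rpow_inv_iff_of_pos (by positivity) hy (by positivity), Real.rpow_natCast]
  norm_cast

theorem Nat.filter_Ioc_pow_le_floor {y : ℝ} (hy : 0 ≤ y) {k : ℕ} (hk : k ≠ 0) :
    {m ∈ Ioc 0 ⌊y⌋₊ | m ^ k ≤ ⌊y⌋₊} = Ioc 0 ⌊y ^ (1 / k : ℝ)⌋₊ := by
  ext m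
  rw [mem_filter, mem_Ioc, mem_Ioc, Nat.pow_le_floor_iff_le_floor_rpow hy hk]
  refine ⟨fun h => ⟨h.1.1, h.2⟩, fun h => ⟨⟨h.1, ?_⟩, h.2⟩⟩
  exact (Nat.le_self_pow hk m).trans ((Nat.pow_le_floor_iff_le_floor_rpow hy hk m).2 h.2)

open ArithmeticFunction in
theorem sum_lam5_conv_one (x : ℝ) (hx : 1 ≤ x) :
    ∑ n ∈ Finset.Icc 1 ⌊x⌋₊, ∑ d ∈ n.divisors, lam5 d =
      ∑ d ∈ Finset.Icc 1 ⌊Real.sqrt x⌋₊,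
        (ArithmeticFunction.moebius d : ℝ) * (⌊(x / (d : ℝ) ^ 2) ^ ((1 : ℝ) / 5)⌋₊ : ℝ) := by
  have hx0 : 0 ≤ x := zero_le_one.trans hx
  have hlam (n : ℕ) : ∑ d ∈ n.divisors, lam5 d = ((legendreTau 5 * ζ) n : ℤ) := by
    rw [coe_mul_zeta_apply]
    push_cast [lam5, legendreTau_apply, sigma_zero_apply]
    rfl
  have hsqrt : {d ∈ Ioc 0 ⌊x⌋₊ | d ^ 2 ≤ ⌊x⌋₊} = Icc 1 ⌊√x⌋₊ := by
    rw [Nat.filter_Ioc_pow_le_floor hx0 two_ne_zero, Real.sqrt_eq_rpow, ← Icc_add_one_left_eq_Ioc]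
    norm_num
  have hroot (d : ℕ) : #{m ∈ Ioc 0 (⌊x⌋₊ / d ^ 2) | m ^ 5 ≤ ⌊x⌋₊ / d ^ 2} =
      ⌊(x / (d : ℝ) ^ 2) ^ ((1 : ℝ) / 5)⌋₊ := by
    rw [← Nat.cast_pow, ← Nat.floor_div_natCast, Nat.filter_Ioc_pow_le_floor (by positivity)
      (by norm_num), Nat.card_Ioc]
    norm_num
  simp only [hlam, ← Int.cast_sum]
  rw [show Icc 1 ⌊x⌋₊ = Ioc 0 ⌊x⌋₊ from Icc_add_one_left_eq_Ioc 0 _, legendreTau_five_mul_zeta,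
    sum_Ioc_expand_mul_expand_zeta two_ne_zero (by norm_num), hsqrt]
  simp [hroot]
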